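/- Let n ≥ 1, ε ≥ 0, and T > 0. Let P, Q, B̃, D ∈ Matrix (Fin n) (Fin n) ℝ with P symmetric and positive semidefinite, Q + Qᵀ = B̃, and Q_{xx} = B̃ * D − Dᵀ * P * D. Let A : ℝ → Matrix (Fin n) (Fin n) ℝ be continuous with A(t) symmetric for every t, and let W : ℝ → (Fin n → ℝ) be continuously differentiable satisfying P *ᵥ W'(t) = −(1/2)((A(t) * Q + Q * A(t)) *ᵥ W(t)) + ε (Q_{xx} *ᵥ W(t)) for all t ∈ [0,T]. If the boundary contribution is nonpositive, i.e. −W(t) ⬝ᵥ ((A(t) * B̃) *ᵥ W(t)) + 2ε W(t) ⬝ᵥ ((B̃ * D) *ᵥ W(t)) ≤ 0 for all t ∈ [0,T], then the discrete energy estimate holds: W(T) ⬝ᵥ (P *ᵥ W(T)) + 2ε ∫_0^T (D *ᵥ W(t)) ⬝ᵥ (P *ᵥ (D *ᵥ W(t))) dt ≤ W(0) ⬝ᵥ (P *ᵥ W(0)). -/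

import Mathlib

/-!
The energy `‖W‖²_P = W ⬝ᵥ P W` has rate `2 W ⬝ᵥ P W'`. Inserting the scheme, the symmetry of
`A` and the SBP property `Q + Qᵀ = B̃` turn the advective part into the boundary term
`-W ⬝ᵥ A B̃ W`, while `Q_xx = B̃ D - Dᵀ P D` splits the viscous part into the boundary term
`2ε W ⬝ᵥ B̃ D W` and the dissipation `-2ε ‖DW‖²_P`. With nonpositive boundary terms the rate is
at most `-2ε ‖DW‖²_P`, and integrating over `[0, T]` gives the estimate.
-/

open Matrix intervalIntegral

section Derivatives

variable {𝕜 ι : Type*} [NontriviallyNormedField 𝕜] [Fintype ι] {u v : 𝕜 → ι → 𝕜}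
  {u' v' : ι → 𝕜} {t : 𝕜}

theorem HasDerivAt.dotProduct (hu : HasDerivAt u u' t) (hv : HasDerivAt v v' t) :
    HasDerivAt (fun s => u s ⬝ᵥ v s) (u' ⬝ᵥ v t + u t ⬝ᵥ v') t := by
  simp only [_root_.dotProduct, ← Finset.sum_add_distrib]
  exact HasDerivAt.fun_sum fun i _ =>
    (hasDerivAt_pi.mp hu i).fun_mul (hasDerivAt_pi.mp hv i)

theorem HasDerivAt.mulVec (M : Matrix ι ι 𝕜) (hu : HasDerivAt u u' t) :
    HasDerivAt (fun s => M *ᵥ u s) (M *ᵥ u') t :=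
  hasDerivAt_pi.2 fun i => by
    have h := (hasDerivAt_const t (M i)).dotProduct hu
    rw [zero_dotProduct, zero_add] at h
    exact h

theorem HasDerivAt.dotProduct_mulVec_self {P : Matrix ι ι 𝕜} (hP : Pᵀ = P)
    (hu : HasDerivAt u u' t) :
    HasDerivAt (fun s => u s ⬝ᵥ (P *ᵥ u s)) (2 * (u t ⬝ᵥ (P *ᵥ u'))) t := by
  convert hu.dotProduct (hu.mulVec P) using 1
  rw [two_mul, ← dotProduct_transpose_mulVec, hP]

end Derivatives

section QuadraticForms

variable {R ι : Type*} [CommRing R] [Fintype ι]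

theorem dotProduct_mulVec_mul_add_mul_self {A : Matrix ι ι R} (hA : Aᵀ = A)
    (Q : Matrix ι ι R) (x : ι → R) :
    x ⬝ᵥ ((A * Q + Q * A) *ᵥ x) = x ⬝ᵥ ((A * (Q + Qᵀ)) *ᵥ x) := by
  have hQA : x ⬝ᵥ ((Q * A) *ᵥ x) = x ⬝ᵥ ((A * Qᵀ) *ᵥ x) := by
    rw [← dotProduct_transpose_mulVec, transpose_mul, hA]
  rw [add_mulVec, dotProduct_add, hQA, mul_add, add_mulVec, dotProduct_add]

theorem dotProduct_transpose_mul_mul_mulVec_self (D P : Matrix ι ι R) (x : ι → R) :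
    x ⬝ᵥ ((Dᵀ * P * D) *ᵥ x) = (D *ᵥ x) ⬝ᵥ (P *ᵥ (D *ᵥ x)) := by
  rw [Matrix.mul_assoc, ← mulVec_mulVec, ← mulVec_mulVec, dotProduct_transpose_mulVec,
    dotProduct_comm]

end QuadraticForms

theorem two_mul_dotProduct_mulVec_eq_of_scheme {ι : Type*} [Fintype ι]
    {A Q B D P : Matrix ι ι ℝ} (hA : Aᵀ = A) {ε : ℝ} {w v : ι → ℝ}
    (hscheme : P *ᵥ v = -(1 / 2 : ℝ) • ((A * Q + Q * A) *ᵥ w) + ε • ((B * D - Dᵀ * P * D) *ᵥ w)) :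
    2 * (w ⬝ᵥ (P *ᵥ v)) = -(w ⬝ᵥ ((A * (Q + Qᵀ)) *ᵥ w)) + 2 * ε * (w ⬝ᵥ ((B * D) *ᵥ w))
      - 2 * ε * ((D *ᵥ w) ⬝ᵥ (P *ᵥ (D *ᵥ w))) := by
  rw [hscheme, dotProduct_add, dotProduct_smul, dotProduct_smul, sub_mulVec, dotProduct_sub,
    dotProduct_mulVec_mul_add_mul_self hA, dotProduct_transpose_mul_mul_mulVec_self, smul_eq_mul,
    smul_eq_mul]
  ring

theorem semidiscrete_energy_estimate_general
    (n : ℕ) (ε : ℝ) (T : ℝ) (hT : 0 < T)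
    (P Q Bt D Qxx : Matrix (Fin n) (Fin n) ℝ)
    (hPsymm : Pᵀ = P)
    (hSBP : Q + Qᵀ = Bt) (hQxx : Qxx = Bt * D - Dᵀ * P * D)
    (A : ℝ → Matrix (Fin n) (Fin n) ℝ)
    (hAsymm : ∀ t, (A t)ᵀ = A t)
    (W W' : ℝ → Fin n → ℝ) (hW : ∀ t, HasDerivAt W (W' t) t)
    (hscheme : ∀ t ∈ Set.Icc (0 : ℝ) T, P *ᵥ W' t =
      -(1 / 2 : ℝ) • ((A t * Q + Q * A t) *ᵥ W t) + ε • (Qxx *ᵥ W t))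
    (hBC : ∀ t ∈ Set.Icc (0 : ℝ) T,
      -(W t ⬝ᵥ ((A t * Bt) *ᵥ W t)) + 2 * ε * (W t ⬝ᵥ ((Bt * D) *ᵥ W t)) ≤ 0) :
    W T ⬝ᵥ (P *ᵥ W T)
        + 2 * ε * ∫ t in (0 : ℝ)..T, (D *ᵥ W t) ⬝ᵥ (P *ᵥ (D *ᵥ W t))
      ≤ W 0 ⬝ᵥ (P *ᵥ W 0) := by
  subst hSBP hQxx
  have henergy t := (hW t).dotProduct_mulVec_self hPsymm
  have hdissipation : Continuous fun t => (D *ᵥ W t) ⬝ᵥ (P *ᵥ (D *ᵥ W t)) := by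
    have hWc : Continuous W := continuous_iff_continuousAt.2 fun t => (hW t).continuousAt
    fun_prop
  have hrate : ∀ t ∈ Set.Ioo 0 T,
      2 * (W t ⬝ᵥ (P *ᵥ W' t)) ≤ -(2 * ε) * ((D *ᵥ W t) ⬝ᵥ (P *ᵥ (D *ᵥ W t))) := by
    intro t ht
    have ht' := Set.Ioo_subset_Icc_self ht
    have hbc := hBC t ht'
    rw [two_mul_dotProduct_mulVec_eq_of_scheme (hAsymm t) (hscheme t ht')]
    linarith
  have hdecay := sub_le_integral_of_hasDeriv_right_of_le hT.le
    (fun t _ => (henergy t).continuousAt.continuousWithinAt)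
    (fun t _ => (henergy t).hasDerivWithinAt)
    (hdissipation.const_mul (-(2 * ε))).integrableOn_Icc hrate
  rw [integral_const_mul] at hdecay
  linarith

/-- Semi-discrete energy estimate: if the boundary contribution in the semi-discrete
energy rate is nonpositive on `[0,T]`, then
`W(T)ᵀPW(T) + 2ε ∫_0^T (DW)ᵀP(DW) dt ≤ W(0)ᵀPW(0)`. -/
theorem semidiscrete_energy_estimate
    (n : ℕ) (hn : 1 ≤ n) (ε : ℝ) (hε : 0 ≤ ε) (T : ℝ) (hT : 0 < T)
    (P Q Bt D Qxx : Matrix (Fin n) (Fin n) ℝ)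
    (hPsymm : Pᵀ = P) (hPpsd : P.PosSemidef)
    (hSBP : Q + Qᵀ = Bt) (hQxx : Qxx = Bt * D - Dᵀ * P * D)
    (A : ℝ → Matrix (Fin n) (Fin n) ℝ)
    (hAcont : ∀ i j, Continuous fun t => A t i j)
    (hAsymm : ∀ t, (A t)ᵀ = A t)
    (W W' : ℝ → Fin n → ℝ) (hW : ∀ t, HasDerivAt W (W' t) t)
    (hW'cont : Continuous W')
    (hscheme : ∀ t ∈ Set.Icc (0 : ℝ) T, P *ᵥ W' t =
      -(1 / 2 : ℝ) • ((A t * Q + Q * A t) *ᵥ W t) + ε • (Qxx *ᵥ W t))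
    (hBC : ∀ t ∈ Set.Icc (0 : ℝ) T,
      -(W t ⬝ᵥ ((A t * Bt) *ᵥ W t)) + 2 * ε * (W t ⬝ᵥ ((Bt * D) *ᵥ W t)) ≤ 0) :
    W T ⬝ᵥ (P *ᵥ W T)
        + 2 * ε * ∫ t in (0 : ℝ)..T, (D *ᵥ W t) ⬝ᵥ (P *ᵥ (D *ᵥ W t))
      ≤ W 0 ⬝ᵥ (P *ᵥ W 0) :=
  semidiscrete_energy_estimate_general n ε T hT P Q Bt D Qxx hPsymm hSBP hQxx A hAsymm W W' hW
    hscheme hBC
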